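/- In a local minimum, every falsified clause is critical: let I be a complete interpretation such that no single-variable flip strictly decreases the number of clauses of Σ falsified by I. Then for every clause α falsified by I and every literal ℓ ∈ α, there exists a clause α' ∈ Σ with ¬ℓ ∈ α' that is once-satisfied by I (its unique satisfied literal being ¬ℓ). -/

import Mathlib

abbrev Var := Nat
abbrev Lit := Var × Bool

def Lit.neg (l : Lit) : Lit := (l.1, !l.2)

abbrev Clause := Finset Lit
abbrev CNF := Finset Clause

/-- An interpretation satisfies a literal. -/
def satLit (I : Var → Bool) (l : Lit) : Prop := I l.1 = l.2

/-- An interpretation satisfies a clause if it makes some literal true. -/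
def satClause (I : Var → Bool) (c : Clause) : Prop := ∃ l ∈ c, satLit I l

/-- An interpretation satisfies a CNF formula if it satisfies every clause. -/
def satCNF (I : Var → Bool) (S : CNF) : Prop := ∀ c ∈ S, satClause I c

def Satisfiable (S : CNF) : Prop := ∃ I, satCNF I S

/-- Γ is a minimal unsatisfiable sub-formula (MUS) of S. -/
def IsMUS (S Γ : CNF) : Prop :=
  Γ ⊆ S ∧ ¬ Satisfiable Γ ∧ ∀ Δ ⊂ Γ, Satisfiable Δ

/-- Simplification of S by assigning literal ℓ to true. -/
def simpCNF (S : CNF) (l : Lit) : CNF :=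
  (S.filter (fun c => l ∉ c)).image (fun c => c.erase l.neg)

/-- Flip the value of variable x in interpretation I. -/
def flipVar (I : Var → Bool) (x : Var) : Var → Bool :=
  fun v => if v = x then !I v else I v

/-- Clause c is once-satisfied by I on literal z. -/
def onceSat (I : Var → Bool) (c : Clause) (z : Lit) : Prop :=
  z ∈ c ∧ satLit I z ∧ ∀ l ∈ c, l ≠ z → ¬ satLit I l

open Classical in
/-- Number of clauses of S falsified by I. -/
noncomputable def numFalsified (S : CNF) (I : Var → Bool) : ℕ :=
  (S.filter (fun c => ¬ satClause I c)).card

/-- One unit-propagation step. -/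
def UPstep (S S' : CNF) : Prop :=
  ∃ l : Lit, ({l} : Clause) ∈ S ∧ S' = simpCNF S l

/-! Flipping the variable of `ℓ` satisfies `α`, and the only clauses the flip can newly falsify
are those once-satisfied on `¬ℓ`; without one, the flip would strictly lower the number of
falsified clauses. -/

theorem satLit_iff_eq {I : Var → Bool} {z : Lit} : satLit I z ↔ (z.1, I z.1) = z := by
  obtain ⟨v, b⟩ := z
  simp [satLit]

theorem satLit_flipVar_of_ne {I : Var → Bool} {x : Var} {z : Lit} (hz : z.1 ≠ x) :
    satLit (flipVar I x) z ↔ satLit I z := by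
  simp [satLit, flipVar, hz]

theorem satLit_flipVar_of_not_satLit {I : Var → Bool} {l : Lit} (hl : ¬ satLit I l) :
    satLit (flipVar I l.1) l := by
  simpa [satLit, flipVar, Bool.eq_not_iff] using hl

theorem Lit.neg_eq_of_not_satLit {I : Var → Bool} {l : Lit} (hl : ¬ satLit I l) :
    l.neg = (l.1, I l.1) := by
  obtain ⟨v, b⟩ := l
  cases b <;> simp_all [satLit, Lit.neg]

theorem onceSat_of_satClause_of_not_satClause_flipVar {I : Var → Bool} {x : Var} {c : Clause}
    (hI : satClause I c) (hflip : ¬ satClause (flipVar I x) c) : onceSat I c (x, I x) := by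
  have hvar : ∀ z ∈ c, satLit I z → z = (x, I x) := by
    intro z hzc hz
    have hzx : z.1 = x := by
      by_contra hzx
      exact hflip ⟨z, hzc, (satLit_flipVar_of_ne hzx).mpr hz⟩
    rw [← satLit_iff_eq.mp hz, hzx]
  obtain ⟨z, hzc, hz⟩ := hI
  obtain rfl := hvar z hzc hz
  exact ⟨hzc, hz, fun l hlc hne hl => hne (hvar l hlc hl)⟩

theorem numFalsified_flipVar_lt {S : CNF} {I : Var → Bool} {x : Var} {α : Clause} (hαS : α ∈ S)
    (hαI : ¬ satClause I α) (hαflip : satClause (flipVar I x) α)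
    (hcrit : ∀ c ∈ S, ¬ onceSat I c (x, I x)) :
    numFalsified S (flipVar I x) < numFalsified S I := by
  classical
  refine Finset.card_lt_card ⟨fun c hc => ?_, fun hsup => ?_⟩
  · rw [Finset.mem_filter] at hc ⊢
    exact ⟨hc.1, fun hcI => hcrit c hc.1 (onceSat_of_satClause_of_not_satClause_flipVar hcI hc.2)⟩
  · exact (Finset.mem_filter.mp (hsup (Finset.mem_filter.mpr ⟨hαS, hαI⟩))).2 hαflip

theorem local_min_falsified_critical_general (S : CNF) (I : Var → Bool)
    (hmin : ∀ x : Var, numFalsified S I ≤ numFalsified S (flipVar I x)) :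
    ∀ α ∈ S, ¬ satClause I α →
      ∀ l ∈ α, ∃ α' ∈ S, Lit.neg l ∈ α' ∧ onceSat I α' (Lit.neg l) := by
  intro α hαS hαI l hlα
  have hl : ¬ satLit I l := fun h => hαI ⟨l, hlα, h⟩
  by_contra hnone
  have hcrit : ∀ c ∈ S, ¬ onceSat I c (l.1, I l.1) := by
    rw [← Lit.neg_eq_of_not_satLit hl]
    exact fun c hc honce => hnone ⟨c, hc, honce.1, honce⟩
  have hαflip : satClause (flipVar I l.1) α := ⟨l, hlα, satLit_flipVar_of_not_satLit hl⟩
  exact (hmin l.1).not_gt (numFalsified_flipVar_lt hαS hαI hαflip hcrit)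

theorem local_min_falsified_critical (S : CNF) (I : Var → Bool)
    (hnotaut : ∀ c ∈ S, ∀ l ∈ c, Lit.neg l ∉ c)
    (hmin : ∀ x : Var, numFalsified S I ≤ numFalsified S (flipVar I x)) :
    ∀ α ∈ S, ¬ satClause I α →
      ∀ l ∈ α, ∃ α' ∈ S, Lit.neg l ∈ α' ∧ onceSat I α' (Lit.neg l) :=
  local_min_falsified_critical_general S I hmin
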